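/- Let G be an infinite, locally finite, strongly connected, quasi-transitive directed graph. Then μ^B = μ^{FB}, where μ^B and μ^{FB} are the exponential growth rates of the numbers of backward extendable and doubly extendable n-step SAWs, respectively. -/

import Mathlib

open Filter ENNReal

structure Dgraph where
  V : Type
  E : Type
  src : E → V
  tgt : E → V

namespace Dgraph

variable (G : Dgraph)

/-- Every vertex has finite in-degree and out-degree. -/
def LocallyFinite : Prop :=
  ∀ v : G.V, {e : G.E | G.src e = v}.Finite ∧ {e : G.E | G.tgt e = v}.Finite

/-- There is a directed edge from `u` to `v`. -/
def Adj (u v : G.V) : Prop := ∃ e : G.E, G.src e = u ∧ G.tgt e = v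

/-- Directed walks exist between any ordered pair of vertices. -/
def StronglyConnected : Prop := ∀ u v : G.V, Relation.ReflTransGen G.Adj u v

/-- An automorphism of a directed multigraph. -/
structure Aut where
  vmap : G.V ≃ G.V
  emap : G.E ≃ G.E
  src_eq : ∀ e, G.src (emap e) = vmap (G.src e)
  tgt_eq : ∀ e, G.tgt (emap e) = vmap (G.tgt e)

/-- `u` and `v` are in the same transitivity class. -/
def SameOrbit (u v : G.V) : Prop := ∃ φ : G.Aut, φ.vmap u = v

/-- Finitely many transitivity classes. -/
def QuasiTransitive : Prop := ∃ S : Finset G.V, ∀ v : G.V, ∃ s ∈ S, G.SameOrbit s v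

def VertexTransitive : Prop := ∀ u v : G.V, G.SameOrbit u v

/-- The orbit of `v` under the stabiliser of `u`. -/
def stabOrbit (u v : G.V) : Set G.V := {w | ∃ φ : G.Aut, φ.vmap u = u ∧ φ.vmap v = w}

/-- Unimodularity: the weight function is constant on transitivity classes,
equivalently `|stab(u)v| = |stab(v)u|` whenever `u, v` are in the same orbit. -/
def Unimodular : Prop := ∀ u v : G.V, G.SameOrbit u v →
  Nat.card (G.stabOrbit u v) = Nat.card (G.stabOrbit v u)

/-- The edge-reversal of `G`. -/
def rev : Dgraph := ⟨G.V, G.E, G.tgt, G.src⟩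

/-- Each edge has a reverse edge: `G` represents an undirected graph. -/
def Undirected : Prop := ∃ ι : G.E ≃ G.E, ∀ e : G.E,
  G.src (ι e) = G.tgt e ∧ G.tgt (ι e) = G.src e ∧ ι (ι e) = e

/-- An `n`-step self-avoiding walk starting at `v`, directed away from `v`. -/
@[ext]
structure SAW (n : ℕ) (v : G.V) where
  vs : Fin (n + 1) → G.V
  es : Fin n → G.E
  hsrc : ∀ i : Fin n, G.src (es i) = vs i.castSucc
  htgt : ∀ i : Fin n, G.tgt (es i) = vs i.succ
  hstart : vs 0 = v
  hinj : Function.Injective vs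

/-- `w` is an initial segment of a singly infinite SAW from `v`. -/
def IsFwdExt {n : ℕ} {v : G.V} (w : G.SAW n v) : Prop :=
  ∃ (vs : ℕ → G.V) (es : ℕ → G.E), Function.Injective vs ∧
    (∀ i : ℕ, G.src (es i) = vs i ∧ G.tgt (es i) = vs (i + 1)) ∧
    (∀ i : Fin (n + 1), vs i = w.vs i) ∧ (∀ i : Fin n, es i = w.es i)

/-- `w` is the final segment of a singly infinite SAW from infinity ending at the
endpoint of `w` (indexed backwards from the endpoint). -/
def IsBwdExt {n : ℕ} {v : G.V} (w : G.SAW n v) : Prop :=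
  ∃ (vs : ℕ → G.V) (es : ℕ → G.E), Function.Injective vs ∧
    (∀ i : ℕ, G.src (es i) = vs (i + 1) ∧ G.tgt (es i) = vs i) ∧
    (∀ i : Fin (n + 1), vs (n - (i : ℕ)) = w.vs i) ∧
    (∀ i : Fin n, es (n - 1 - (i : ℕ)) = w.es i)

/-- `w` is a sub-walk of a doubly infinite SAW. -/
def IsDblExt {n : ℕ} {v : G.V} (w : G.SAW n v) : Prop :=
  ∃ (vs : ℤ → G.V) (es : ℤ → G.E), Function.Injective vs ∧
    (∀ i : ℤ, G.src (es i) = vs i ∧ G.tgt (es i) = vs (i + 1)) ∧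
    ∃ k : ℤ, (∀ i : Fin (n + 1), vs (k + (i : ℕ)) = w.vs i) ∧
      (∀ i : Fin n, es (k + (i : ℕ)) = w.es i)

noncomputable def sigma (n : ℕ) (v : G.V) : ℕ := Nat.card (G.SAW n v)
noncomputable def sigmaF (n : ℕ) (v : G.V) : ℕ := Nat.card {w : G.SAW n v // G.IsFwdExt w}
noncomputable def sigmaB (n : ℕ) (v : G.V) : ℕ := Nat.card {w : G.SAW n v // G.IsBwdExt w}
noncomputable def sigmaFB (n : ℕ) (v : G.V) : ℕ := Nat.card {w : G.SAW n v // G.IsDblExt w}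

noncomputable def ssigma (n : ℕ) : ℝ≥0∞ := ⨆ v : G.V, (G.sigma n v : ℝ≥0∞)
noncomputable def ssigmaF (n : ℕ) : ℝ≥0∞ := ⨆ v : G.V, (G.sigmaF n v : ℝ≥0∞)
noncomputable def ssigmaB (n : ℕ) : ℝ≥0∞ := ⨆ v : G.V, (G.sigmaB n v : ℝ≥0∞)
noncomputable def ssigmaFB (n : ℕ) : ℝ≥0∞ := ⨆ v : G.V, (G.sigmaFB n v : ℝ≥0∞)

/-- Undirected graph distance: length of a shortest path ignoring orientations. -/
noncomputable def udist (u v : G.V) : ℕ :=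
  sInf {n : ℕ | ∃ f : Fin (n + 1) → G.V, f 0 = u ∧ f (Fin.last n) = v ∧
    ∀ i : Fin n, (∃ e, G.src e = f i.castSucc ∧ G.tgt e = f i.succ) ∨
      (∃ e, G.src e = f i.succ ∧ G.tgt e = f i.castSucc)}

end Dgraph

open Filter ENNReal

attribute [local instance] Classical.propDecidable


open Filter ENNReal

/-!
Cutting an `(n + m)`-step walk into its first `n` and its last `m` steps preserves backward and
double extendability, so `σ^B` and `σ^{FB}` are submultiplicative and Fekete's lemma gives both
limits, while `σ^{FB} ≤ σ^B` gives `μ^{FB} ≤ μ^B`.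

Conversely, by König's lemma an `n`-step SAW with backward extendable forward extensions of every
length is doubly extendable: the finite approximations are pairs of a walk into its start and a
forward extension, meeting only at the start. As there are finitely many `n`-step SAWs from a
vertex and finitely many orbits, one length `M` suffices for all of them, so the first `n` steps
of any backward extendable `(n + m)`-step walk with `m ≥ M` are doubly extendable. Hence
`σ^B_{n+m} ≤ σ^{FB}_n σ^B_m` for `m ≥ M`, and iterating in `m` gives `μ^B ≤ (σ^{FB}_n)^{1/n}`.
-/

open scoped NNReal Topology

open CategoryTheory Opposite in
theorem exists_compatible_seq_of_finite {X : ℕ → Type*} [hfin : ∀ m, Finite (X m)]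
    [hne : ∀ m, Nonempty (X m)] (ρ : ∀ m, X (m + 1) → X m) :
    ∃ x : ∀ m, X m, ∀ m, ρ m (x (m + 1)) = x m := by
  let F := Functor.ofOpSequence (C := Type _) (X := X) (fun m => TypeCat.ofHom (ρ m))
  have : ∀ j, Finite (F.obj j) := fun j => hfin j.unop
  have : ∀ j, Nonempty (F.obj j) := fun j => hne j.unop
  obtain ⟨s, hs⟩ := nonempty_sections_of_finite_inverse_system F
  refine ⟨fun m => s (op m), fun m => ?_⟩
  have := hs (homOfLE (Nat.le_add_right m 1)).op
  simp only [F, Functor.ofOpSequence_map_homOfLE_succ] at this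
  exact this

theorem one_le_iSup_natCast_of_ne_zero {ι : Type*} {f : ι → ℕ} (h : ⨆ i, (f i : ℝ≥0∞) ≠ 0) :
    1 ≤ ⨆ i, (f i : ℝ≥0∞) := by
  obtain ⟨i, hi⟩ : ∃ i, (f i : ℝ≥0∞) ≠ 0 := by simpa using h
  exact le_iSup_of_le i (by exact_mod_cast Nat.one_le_iff_ne_zero.mpr (by exact_mod_cast hi))

theorem ENNReal.tendsto_const_rpow {α : Type*} {l : Filter α} [l.NeBot] {c : ℝ≥0∞} (hc : c ≠ ⊤)
    {f : α → ℝ} {y : ℝ} (hf : Tendsto f l (𝓝 y)) (hf0 : ∀ a, 0 ≤ f a) (hy : c ≠ 0 ∨ 0 < y) :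
    Tendsto (fun a => c ^ f a) l (𝓝 (c ^ y)) := by
  lift c to ℝ≥0 using hc
  simp only [← ENNReal.coe_rpow_of_nonneg _ (hf0 _)]
  rw [← ENNReal.coe_rpow_of_nonneg _ (ge_of_tendsto' hf hf0)]
  exact ENNReal.tendsto_coe.2 (tendsto_const_nhds.nnrpow hf (by exact_mod_cast hy))

theorem exists_tendsto_rpow_one_div_of_submultiplicative {a : ℕ → ℝ≥0∞} (hfin : ∀ n, a n ≠ ⊤)
    (hone : ∀ n, a n ≠ 0 → 1 ≤ a n) (hsub : ∀ m n, a (m + n) ≤ a m * a n) :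
    ∃ μ, Tendsto (fun n : ℕ => a n ^ (1 / (n : ℝ))) atTop (𝓝 μ) := by
  by_cases hz : ∃ N, a N = 0
  · obtain ⟨N, hN⟩ := hz
    refine ⟨0, tendsto_const_nhds.congr' (eventually_atTop.2 ⟨N + 1, fun n hn => ?_⟩)⟩
    have : a n = 0 := by
      simpa [show N + (n - N) = n by omega, hN] using hsub N (n - N)
    show 0 = a n ^ (1 / (n : ℝ))
    rw [this, ENNReal.zero_rpow_of_pos (one_div_pos.2 (by exact_mod_cast (by omega : 0 < n)))]
  simp only [not_exists] at hz
  have h1 : ∀ n, 1 ≤ (a n).toReal := fun n => by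
    simpa using ENNReal.toReal_mono (hfin n) (hone n (hz n))
  set u : ℕ → ℝ := fun n => Real.log (a n).toReal
  have hu : Subadditive u := fun m n => by
    have h := ENNReal.toReal_mono (ENNReal.mul_ne_top (hfin m) (hfin n)) (hsub m n)
    rw [ENNReal.toReal_mul] at h
    calc u (m + n) ≤ Real.log ((a m).toReal * (a n).toReal) :=
          Real.log_le_log (by linarith [h1 (m + n)]) h
      _ = u m + u n := Real.log_mul (by linarith [h1 m]) (by linarith [h1 n])
  have hbdd : BddBelow (Set.range fun n => u n / n) :=
    ⟨0, by rintro _ ⟨n, rfl⟩; exact div_nonneg (Real.log_nonneg (h1 n)) n.cast_nonneg⟩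
  have heq : ∀ n : ℕ, a n ^ (1 / (n : ℝ)) = ENNReal.ofReal (Real.exp (u n / n)) := fun n => by
    have hpos : 0 < (a n).toReal := by linarith [h1 n]
    rw [← ENNReal.ofReal_toReal (hfin n), ENNReal.ofReal_rpow_of_pos hpos,
      Real.rpow_def_of_pos hpos, mul_one_div]
  exact ⟨_, ((ENNReal.continuous_ofReal.tendsto _).comp
    ((Real.continuous_exp.tendsto _).comp (hu.tendsto_lim hbdd))).congr fun n => (heq n).symm⟩

theorem le_rpow_one_div_of_add_le_mul {a : ℕ → ℝ≥0∞} {μ c : ℝ≥0∞}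
    (ha : Tendsto (fun n : ℕ => a n ^ (1 / (n : ℝ))) atTop (𝓝 μ)) (hc : c ≠ ⊤) {n M : ℕ}
    (hn : n ≠ 0) (haM : a M ≠ ⊤) (h : ∀ m, M ≤ m → a (n + m) ≤ c * a m) :
    μ ≤ c ^ (1 / (n : ℝ)) := by
  -- With `max (a M) 1` in place of `a M`, the constant's `1 / N`-th root tends to `1`.
  set C := max (a M) 1
  have hiter : ∀ k : ℕ, a (M + k * n) ≤ c ^ k * C := by
    intro k
    induction k with
    | zero =>
      simp only [zero_mul, add_zero, pow_zero, one_mul]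
      exact le_max_left _ _
    | succ k ih =>
      calc a (M + (k + 1) * n) = a (n + (M + k * n)) := by ring_nf
        _ ≤ c * a (M + k * n) := h _ (Nat.le_add_right _ _)
        _ ≤ c * (c ^ k * C) := by gcongr
        _ = c ^ (k + 1) * C := by ring
  have hN : Tendsto (fun k => M + k * n) atTop atTop :=
    tendsto_atTop_mono (fun k => le_add_left (Nat.le_mul_of_pos_right k (Nat.pos_of_ne_zero hn)))
      tendsto_id
  have ht : Tendsto (fun k : ℕ => 1 / ((M + k * n : ℕ) : ℝ)) atTop (𝓝 0) :=
    tendsto_one_div_atTop_nhds_zero_nat.comp hN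
  have hkt : Tendsto (fun k : ℕ => (k : ℝ) * (1 / ((M + k * n : ℕ) : ℝ))) atTop (𝓝 (1 / n)) := by
    have := (tendsto_natCast_div_add_atTop ((M : ℝ) / n)).const_mul (1 / (n : ℝ))
    rw [mul_one] at this
    refine this.congr' (eventually_atTop.2 ⟨1, fun k hk => ?_⟩)
    have : (0 : ℝ) < k := by exact_mod_cast hk
    have : (n : ℝ) ≠ 0 := by exact_mod_cast hn
    push_cast
    field_simp
    ring
  have hlim := ENNReal.Tendsto.mul
    (ENNReal.tendsto_const_rpow hc hkt (fun k => by positivity) (Or.inr (by positivity)))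
    (Or.inr (by simp))
    (ENNReal.tendsto_const_rpow (max_ne_top haM one_ne_top) ht (fun k => by positivity)
      (Or.inl (zero_lt_one.trans_le (le_max_right _ _)).ne'))
    (Or.inr (ENNReal.rpow_ne_top_of_nonneg (by positivity) hc))
  rw [ENNReal.rpow_zero, mul_one] at hlim
  refine le_of_tendsto_of_tendsto' (ha.comp hN) hlim fun k => ?_
  calc a (M + k * n) ^ (1 / ((M + k * n : ℕ) : ℝ))
      ≤ (c ^ k * C) ^ (1 / ((M + k * n : ℕ) : ℝ)) :=
        ENNReal.rpow_le_rpow (hiter k) (by positivity)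
    _ = _ := by
        rw [ENNReal.mul_rpow_of_nonneg _ _ (by positivity), ← ENNReal.rpow_natCast,
          ← ENNReal.rpow_mul]

namespace Dgraph

variable {G : Dgraph}

namespace SAW

variable {n : ℕ} {v : G.V}

theorem es_injective : Function.Injective (SAW.es : G.SAW n v → Fin n → G.E) := by
  intro w w' h
  refine SAW.ext (funext fun i => ?_) h
  induction i using Fin.induction with
  | zero => rw [w.hstart, w'.hstart]
  | succ i _ => rw [← w.htgt, ← w'.htgt, h]

def take (m : ℕ) (h : m ≤ n) (w : G.SAW n v) : G.SAW m v where
  vs i := w.vs (Fin.castLE (Nat.succ_le_succ h) i)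
  es i := w.es (Fin.castLE h i)
  hsrc _ := w.hsrc _
  htgt _ := w.htgt _
  hstart := w.hstart
  hinj := w.hinj.comp (Fin.castLE_injective _)

@[simp]
theorem take_take {k m : ℕ} (hk : k ≤ m) (hm : m ≤ n) (w : G.SAW n v) :
    (w.take m hm).take k hk = w.take k (hk.trans hm) := rfl

def drop (k m : ℕ) (h : k + m = n) (w : G.SAW n v) : G.SAW m (w.vs ⟨k, by omega⟩) where
  vs i := w.vs ⟨k + i, by omega⟩
  es i := w.es ⟨k + i, by omega⟩
  hsrc _ := w.hsrc _
  htgt _ := w.htgt _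
  hstart := rfl
  hinj i j hij := Fin.ext (by simpa using congrArg Fin.val (w.hinj hij))

theorem finite (hlf : G.LocallyFinite) (n : ℕ) (v : G.V) : Finite (G.SAW n v) := by
  induction n with
  | zero => exact Finite.of_injective _ es_injective
  | succ n ih =>
    have : ∀ w : G.SAW n v, Finite {e : G.E // G.src e = w.vs (Fin.last n)} :=
      fun w => (hlf _).1.to_subtype
    refine Finite.of_injective
      (fun w : G.SAW (n + 1) v => (⟨w.take n n.le_succ, w.es (Fin.last n), w.hsrc (Fin.last n)⟩ :
        Σ w₀ : G.SAW n v, {e : G.E // G.src e = w₀.vs (Fin.last n)})) fun w w' h => ?_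
    refine es_injective (funext fun i => ?_)
    induction i using Fin.lastCases with
    | last => exact congrArg (fun p => p.2.1) h
    | cast i => exact congrArg (fun p => p.1.es i) h

end SAW

theorem LocallyFinite.rev (hlf : G.LocallyFinite) : G.rev.LocallyFinite :=
  fun v => (hlf v).symm

variable {n : ℕ} {v : G.V} {w : G.SAW n v}

theorem IsBwdExt.take (hw : G.IsBwdExt w) (m : ℕ) (h : m ≤ n) : G.IsBwdExt (w.take m h) := by
  obtain ⟨vs, es, hinj, hedge, hvs, hes⟩ := hw
  refine ⟨fun j => vs (j + (n - m)), fun j => es (j + (n - m)), fun a b hab => ?_,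
    fun i => ?_, fun i => ?_, fun i => ?_⟩
  · simpa using hinj hab
  · rw [(hedge _).1, (hedge _).2, Nat.add_right_comm]
    exact ⟨rfl, rfl⟩
  · have := i.isLt
    exact (congrArg vs (by simp only [Fin.val_castLE]; omega)).trans (hvs _)
  · have := i.isLt
    exact (congrArg es (by simp only [Fin.val_castLE]; omega)).trans (hes _)

theorem IsBwdExt.drop (hw : G.IsBwdExt w) (k m : ℕ) (h : k + m = n) :
    G.IsBwdExt (w.drop k m h) := by
  obtain ⟨vs, es, hinj, hedge, hvs, hes⟩ := hw
  refine ⟨vs, es, hinj, hedge, fun i => ?_, fun i => ?_⟩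
  · have e : m - i = n - (k + i) := by omega
    rw [e]
    exact hvs ⟨k + i, by omega⟩
  · have e : m - 1 - i = n - 1 - (k + i) := by omega
    rw [e]
    exact hes ⟨k + i, by omega⟩

theorem IsDblExt.take (hw : G.IsDblExt w) (m : ℕ) (h : m ≤ n) : G.IsDblExt (w.take m h) := by
  obtain ⟨vs, es, hinj, hedge, k, hvs, hes⟩ := hw
  exact ⟨vs, es, hinj, hedge, k, fun i => hvs (Fin.castLE (by omega) i),
    fun i => hes (Fin.castLE h i)⟩

theorem IsDblExt.drop (hw : G.IsDblExt w) (k m : ℕ) (h : k + m = n) :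
    G.IsDblExt (w.drop k m h) := by
  obtain ⟨vs, es, hinj, hedge, l, hvs, hes⟩ := hw
  refine ⟨vs, es, hinj, hedge, l + k, fun i => ?_, fun i => ?_⟩
  · rw [add_assoc, ← Nat.cast_add]
    exact hvs ⟨k + i, by omega⟩
  · rw [add_assoc, ← Nat.cast_add]
    exact hes ⟨k + i, by omega⟩

theorem IsDblExt.isBwdExt (hw : G.IsDblExt w) : G.IsBwdExt w := by
  obtain ⟨vs, es, hinj, hedge, k, hvs, hes⟩ := hw
  refine ⟨fun j => vs (k + n - j), fun j => es (k + n - 1 - j), fun a b hab => ?_,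
    fun i => ?_, fun i => ?_, fun i => ?_⟩
  · simpa using hinj hab
  · rw [(hedge _).1, (hedge _).2]
    constructor <;> congr 1 <;> omega
  · have := i.isLt
    rw [← hvs]
    exact congrArg vs (by omega)
  · have := i.isLt
    rw [← hes]
    exact congrArg es (by omega)

namespace Aut

variable (φ : G.Aut) {u u' : G.V}

def symm : G.Aut where
  vmap := φ.vmap.symm
  emap := φ.emap.symm
  src_eq e := φ.vmap.injective (by rw [← φ.src_eq]; simp)
  tgt_eq e := φ.vmap.injective (by rw [← φ.tgt_eq]; simp)

theorem symm_vmap_eq (h : φ.vmap u = u') : φ.symm.vmap u' = u :=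
  φ.vmap.symm_apply_eq.mpr h.symm

def mapSAW (h : φ.vmap u = u') (w : G.SAW n u) : G.SAW n u' where
  vs i := φ.vmap (w.vs i)
  es i := φ.emap (w.es i)
  hsrc i := by rw [φ.src_eq, w.hsrc]
  htgt i := by rw [φ.tgt_eq, w.htgt]
  hstart := by rw [w.hstart, h]
  hinj := φ.vmap.injective.comp w.hinj

theorem mapSAW_injective (h : φ.vmap u = u') :
    Function.Injective (φ.mapSAW h : G.SAW n u → G.SAW n u') := fun _ _ hww' =>
  SAW.es_injective (funext fun i => φ.emap.injective (congrFun (congrArg SAW.es hww') i))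

theorem mapSAW_symm_mapSAW (h : φ.vmap u = u') (w : G.SAW n u') :
    φ.mapSAW h (φ.symm.mapSAW (φ.symm_vmap_eq h) w) = w :=
  SAW.es_injective (funext fun _ => φ.emap.apply_symm_apply _)

theorem take_mapSAW (h : φ.vmap u = u') (w : G.SAW n u) (m : ℕ) (hm : m ≤ n) :
    (φ.mapSAW h w).take m hm = φ.mapSAW h (w.take m hm) := rfl

theorem isBwdExt_mapSAW (h : φ.vmap u = u') {w : G.SAW n u} (hw : G.IsBwdExt w) :
    G.IsBwdExt (φ.mapSAW h w) := by
  obtain ⟨vs, es, hinj, hedge, hvs, hes⟩ := hw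
  refine ⟨φ.vmap ∘ vs, φ.emap ∘ es, φ.vmap.injective.comp hinj, fun i => ?_,
    fun i => congrArg φ.vmap (hvs i), fun i => congrArg φ.emap (hes i)⟩
  simp only [Function.comp_apply, φ.src_eq, φ.tgt_eq, (hedge i).1, (hedge i).2, and_self]

theorem isDblExt_mapSAW (h : φ.vmap u = u') {w : G.SAW n u} (hw : G.IsDblExt w) :
    G.IsDblExt (φ.mapSAW h w) := by
  obtain ⟨vs, es, hinj, hedge, k, hvs, hes⟩ := hw
  refine ⟨φ.vmap ∘ vs, φ.emap ∘ es, φ.vmap.injective.comp hinj, fun i => ?_, k,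
    fun i => congrArg φ.vmap (hvs i), fun i => congrArg φ.emap (hes i)⟩
  simp only [Function.comp_apply, φ.src_eq, φ.tgt_eq, (hedge i).1, (hedge i).2, and_self]

end Aut

theorem sigma_le_of_sameOrbit (hlf : G.LocallyFinite) {u u' : G.V} (h : G.SameOrbit u u')
    (n : ℕ) : G.sigma n u' ≤ G.sigma n u := by
  obtain ⟨φ, hφ⟩ := h
  have := SAW.finite hlf n u
  exact Nat.card_le_card_of_injective _ (φ.symm.mapSAW_injective (φ.symm_vmap_eq hφ))

theorem ssigma_ne_top (hlf : G.LocallyFinite) (hqt : G.QuasiTransitive) (n : ℕ) :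
    G.ssigma n ≠ ⊤ := by
  obtain ⟨S, hS⟩ := hqt
  refine ne_top_of_le_ne_top (natCast_ne_top (S.sup (G.sigma n))) (iSup_le fun v => ?_)
  obtain ⟨s, hs, hsv⟩ := hS v
  exact_mod_cast (sigma_le_of_sameOrbit hlf hsv n).trans (Finset.le_sup hs)

theorem ssigmaB_le_ssigma (hlf : G.LocallyFinite) (n : ℕ) : G.ssigmaB n ≤ G.ssigma n :=
  iSup_mono fun v => by
    have := SAW.finite hlf n v
    exact_mod_cast Finite.card_subtype_le _

theorem ssigmaFB_le_ssigmaB (hlf : G.LocallyFinite) (n : ℕ) : G.ssigmaFB n ≤ G.ssigmaB n :=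
  iSup_mono fun v => by
    have := SAW.finite hlf n v
    exact_mod_cast Nat.card_le_card_of_injective _
      (Subtype.impEmbedding _ _ fun (w : G.SAW n v) (hw : G.IsDblExt w) => hw.isBwdExt).injective

theorem ssigmaB_ne_top (hlf : G.LocallyFinite) (hqt : G.QuasiTransitive) (n : ℕ) :
    G.ssigmaB n ≠ ⊤ :=
  ne_top_of_le_ne_top (ssigma_ne_top hlf hqt n) (ssigmaB_le_ssigma hlf n)

theorem ssigmaFB_ne_top (hlf : G.LocallyFinite) (hqt : G.QuasiTransitive) (n : ℕ) :
    G.ssigmaFB n ≠ ⊤ :=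
  ne_top_of_le_ne_top (ssigmaB_ne_top hlf hqt n) (ssigmaFB_le_ssigmaB hlf n)

theorem card_le_card_mul_iSup (hlf : G.LocallyFinite) (n m : ℕ) (v : G.V)
    (Q : G.SAW (n + m) v → Prop) (Q₁ : G.SAW n v → Prop) (Q₂ : ∀ {u : G.V}, G.SAW m u → Prop)
    (h : ∀ w, Q w → Q₁ (w.take n (Nat.le_add_right n m)) ∧ Q₂ (w.drop n m rfl)) :
    (Nat.card {w // Q w} : ℝ≥0∞) ≤
      Nat.card {w // Q₁ w} * ⨆ u, (Nat.card {w : G.SAW m u // Q₂ w} : ℝ≥0∞) := by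
  have := SAW.finite hlf n v
  have := fun u => SAW.finite hlf m u
  have := Fintype.ofFinite {w // Q₁ w}
  let F (w : {w // Q w}) : Σ w₁ : {w // Q₁ w}, {w₂ : G.SAW m (w₁.1.vs (Fin.last n)) // Q₂ w₂} :=
    ⟨⟨_, (h w.1 w.2).1⟩, ⟨_, (h w.1 w.2).2⟩⟩
  have hF : Function.Injective F := fun a b hab => by
    refine Subtype.ext (SAW.es_injective (funext fun i => ?_))
    induction i using Fin.addCases with
    | left i => exact congrArg (fun p => p.1.1.es i) hab
    | right i => exact congrArg (fun p => p.2.1.es i) hab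
  calc (Nat.card {w // Q w} : ℝ≥0∞)
      ≤ Nat.card (Σ w₁ : {w // Q₁ w}, {w₂ : G.SAW m (w₁.1.vs (Fin.last n)) // Q₂ w₂}) := by
        exact_mod_cast Nat.card_le_card_of_injective F hF
    _ = ∑ w₁ : {w // Q₁ w}, (Nat.card {w₂ : G.SAW m (w₁.1.vs (Fin.last n)) // Q₂ w₂} : ℝ≥0∞) := by
        rw [Nat.card_sigma]
        push_cast
        rfl
    _ ≤ ∑ _w₁ : {w // Q₁ w}, ⨆ u, (Nat.card {w : G.SAW m u // Q₂ w} : ℝ≥0∞) :=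
        Finset.sum_le_sum fun w₁ _ => le_iSup (fun u => (Nat.card {w : G.SAW m u // Q₂ w} : ℝ≥0∞)) _
    _ = Nat.card {w // Q₁ w} * ⨆ u, (Nat.card {w : G.SAW m u // Q₂ w} : ℝ≥0∞) := by
        rw [Finset.sum_const, Finset.card_univ, nsmul_eq_mul, Nat.card_eq_fintype_card]

theorem ssigmaB_add_le (hlf : G.LocallyFinite) (n m : ℕ) :
    G.ssigmaB (n + m) ≤ G.ssigmaB n * G.ssigmaB m :=
  iSup_le fun v => (card_le_card_mul_iSup hlf n m v _ _ (fun w => G.IsBwdExt w)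
    fun _ hw => ⟨hw.take _ _, hw.drop _ _ _⟩).trans
      (mul_le_mul_left (le_iSup (fun v => (G.sigmaB n v : ℝ≥0∞)) v) _)

theorem ssigmaFB_add_le (hlf : G.LocallyFinite) (n m : ℕ) :
    G.ssigmaFB (n + m) ≤ G.ssigmaFB n * G.ssigmaFB m :=
  iSup_le fun v => (card_le_card_mul_iSup hlf n m v _ _ (fun w => G.IsDblExt w)
    fun _ hw => ⟨hw.take _ _, hw.drop _ _ _⟩).trans
      (mul_le_mul_left (le_iSup (fun v => (G.sigmaFB n v : ℝ≥0∞)) v) _)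

def IsRay (G : Dgraph) (vs : ℕ → G.V) (es : ℕ → G.E) : Prop :=
  Function.Injective vs ∧ ∀ i, G.src (es i) = vs i ∧ G.tgt (es i) = vs (i + 1)

theorem exists_isRay_of_take_eq {ℓ : ℕ → ℕ} (hℓ : StrictMono ℓ) (f : ∀ m, G.SAW (ℓ m) v)
    (hf : ∀ m, (f (m + 1)).take (ℓ m) (hℓ.monotone m.le_succ) = f m) :
    ∃ vs es, G.IsRay vs es ∧ (∀ m (i : Fin (ℓ m + 1)), vs i = (f m).vs i) ∧
      ∀ m (i : Fin (ℓ m)), es i = (f m).es i := by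
  have hcoh : ∀ a b (hab : a ≤ b), (f b).take (ℓ a) (hℓ.monotone hab) = f a := by
    intro a b hab
    induction b, hab using Nat.le_induction with
    | base => rfl
    | succ b hab ih => rw [← ih, ← hf b, SAW.take_take]
  have hvs : ∀ a b i (ha : i ≤ ℓ a) (hb : i ≤ ℓ b),
      (f a).vs ⟨i, by omega⟩ = (f b).vs ⟨i, by omega⟩ := fun a b i _ _ => by
    rw [← hcoh a (max a b) (le_max_left a b), ← hcoh b (max a b) (le_max_right a b)]
    rfl
  have hes : ∀ a b i (ha : i < ℓ a) (hb : i < ℓ b),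
      (f a).es ⟨i, ha⟩ = (f b).es ⟨i, hb⟩ := fun a b i _ _ => by
    rw [← hcoh a (max a b) (le_max_left a b), ← hcoh b (max a b) (le_max_right a b)]
    rfl
  have hle : ∀ k, k ≤ ℓ k := hℓ.id_le
  have hlt : ∀ k, k < ℓ (k + 1) := fun k => (hle k).trans_lt (hℓ k.lt_succ_self)
  refine ⟨fun k => (f k).vs ⟨k, Nat.lt_succ_of_le (hle k)⟩, fun k => (f (k + 1)).es ⟨k, hlt k⟩,
    ⟨fun a b hab => ?_, fun k => ⟨?_, ?_⟩⟩,
    fun m i => hvs _ _ _ (hle _) (Nat.lt_succ_iff.mp i.isLt), fun m i => hes _ _ _ (hlt _) i.isLt⟩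
  · have hab' := (hvs a (max a b) a (hle a) ((le_max_left a b).trans (hle _))).symm.trans
      (hab.trans (hvs b (max a b) b (hle b) ((le_max_right a b).trans (hle _))))
    simpa using (f (max a b)).hinj hab'
  · exact ((f (k + 1)).hsrc _).trans (hvs _ _ _ (hlt k).le (hle k))
  · exact (f (k + 1)).htgt _

theorem isDblExt_of_isRay {w : G.SAW n v} {vsB vsF : ℕ → G.V} {esB esF : ℕ → G.E}
    (hB : G.rev.IsRay vsB esB) (hF : G.IsRay vsF esF) (h0 : vsB 0 = vsF 0)
    (hdisj : ∀ i j, vsB i = vsF j → i = 0) (hvs : ∀ i : Fin (n + 1), vsF i = w.vs i)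
    (hes : ∀ i : Fin n, esF i = w.es i) : G.IsDblExt w := by
  refine ⟨fun | .ofNat k => vsF k | .negSucc k => vsB (k + 1),
    fun | .ofNat k => esF k | .negSucc k => esB k, ?_, ?_, 0, fun i => ?_, fun i => ?_⟩
  · rintro (a | a) (b | b) hab
    · exact congrArg _ (hF.1 hab)
    · exact absurd (hdisj _ _ hab.symm) b.succ_ne_zero
    · exact absurd (hdisj _ _ hab) a.succ_ne_zero
    · exact congrArg _ (Nat.succ_injective (hB.1 hab))
  · rintro (k | k)
    · exact hF.2 k
    · refine ⟨(hB.2 k).2, ?_⟩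
      cases k with
      | zero => exact (hB.2 0).1.trans h0
      | succ k => exact (hB.2 (k + 1)).1
  · rw [zero_add]
    exact hvs i
  · rw [zero_add]
    exact hes i

def ExtendsToBwdExt (m : ℕ) (w : G.SAW n v) : Prop :=
  ∃ w' : G.SAW (n + m) v, G.IsBwdExt w' ∧ w'.take n (Nat.le_add_right n m) = w

theorem ExtendsToBwdExt.mono {m m' : ℕ} (h : m ≤ m') (hw : ExtendsToBwdExt m' w) :
    ExtendsToBwdExt m w := by
  obtain ⟨w', hw', rfl⟩ := hw
  exact ⟨w'.take (n + m) (by omega), hw'.take _ _, rfl⟩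

theorem ExtendsToBwdExt.mapSAW {m : ℕ} {u : G.V} (φ : G.Aut) (h : φ.vmap v = u)
    (hw : ExtendsToBwdExt m w) : ExtendsToBwdExt m (φ.mapSAW h w) := by
  obtain ⟨w', hw', rfl⟩ := hw
  exact ⟨φ.mapSAW h w', φ.isBwdExt_mapSAW h hw', rfl⟩

-- The first component is read backwards from `v`, as a walk of the reversed graph.
def TwoSidedExt (w : G.SAW n v) (m : ℕ) : Type :=
  {p : G.rev.SAW m v × G.SAW (n + m) v //
    p.2.take n (Nat.le_add_right n m) = w ∧ ∀ i j, p.1.vs i = p.2.vs j → (i : ℕ) = 0}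

namespace TwoSidedExt

def restrict {m : ℕ} (p : TwoSidedExt w (m + 1)) : TwoSidedExt w m :=
  ⟨(p.1.1.take m m.le_succ, p.1.2.take (n + m) (by omega)), p.2.1, fun _ _ h => p.2.2 _ _ h⟩

theorem finite (hlf : G.LocallyFinite) (m : ℕ) : Finite (TwoSidedExt w m) :=
  have := SAW.finite hlf.rev m v
  have := SAW.finite hlf (n + m) v
  Subtype.finite

theorem nonempty {m : ℕ} (h : ExtendsToBwdExt m w) : Nonempty (TwoSidedExt w m) := by
  obtain ⟨w', ⟨vs, es, hinj, hedge, hvs, -⟩, hw'⟩ := h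
  have hv : vs (n + m) = v := (hvs 0).trans w'.hstart
  refine ⟨(⟨fun i => vs (n + m + i), fun i => es (n + m + i), fun i => (hedge _).2,
    fun i => (hedge _).1, hv, fun i j hij => Fin.ext (by simpa using hinj hij)⟩, w'), hw',
    fun i j hij => ?_⟩
  have := hinj (hij.trans (hvs j).symm)
  omega

end TwoSidedExt

theorem isDblExt_of_forall_extendsToBwdExt (hlf : G.LocallyFinite)
    (h : ∀ m, ExtendsToBwdExt m w) : G.IsDblExt w := by
  have := TwoSidedExt.finite (w := w) hlf
  have := fun m => TwoSidedExt.nonempty (h m)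
  obtain ⟨g, hg⟩ :=
    exists_compatible_seq_of_finite fun m => TwoSidedExt.restrict (w := w) (m := m)
  obtain ⟨vsB, esB, hB, hBvs, -⟩ := exists_isRay_of_take_eq (G := G.rev) strictMono_id
    (fun m => (g m).1.1) fun m => congrArg (fun p => p.1.1) (hg m)
  obtain ⟨vsF, esF, hF, hFvs, hFes⟩ := exists_isRay_of_take_eq (strictMono_id.const_add n)
    (fun m => (g m).1.2) fun m => congrArg (fun p => p.1.2) (hg m)
  refine isDblExt_of_isRay hB hF ?_ (fun i j hij => ?_) (fun i => ?_) (fun i => ?_)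
  · exact ((hBvs 0 0).trans (g 0).1.1.hstart).trans ((hFvs 0 0).trans (g 0).1.2.hstart).symm
  · have hi : i < i + j + 1 := by omega
    have hj : j < n + (i + j) + 1 := by omega
    exact (g (i + j)).2.2 ⟨i, hi⟩ ⟨j, hj⟩
      ((hBvs (i + j) ⟨i, hi⟩).symm.trans (hij.trans (hFvs (i + j) ⟨j, hj⟩)))
  · exact (hFvs 0 ⟨i, i.isLt⟩).trans (congrArg (SAW.vs · i) (g 0).2.1)
  · exact (hFes 0 ⟨i, i.isLt⟩).trans (congrArg (SAW.es · i) (g 0).2.1)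

theorem exists_extendsToBwdExt_imp_isDblExt (hlf : G.LocallyFinite) (n : ℕ) (v : G.V) :
    ∃ M, ∀ w : G.SAW n v, ExtendsToBwdExt M w → G.IsDblExt w := by
  have := SAW.finite hlf n v
  have : ∀ w : G.SAW n v, ∃ m, ExtendsToBwdExt m w → G.IsDblExt w := fun w => by
    by_contra! hw
    exact (hw 0).2 (isDblExt_of_forall_extendsToBwdExt hlf fun m => (hw m).1)
  choose f hf using this
  obtain ⟨M, hM⟩ := (Set.finite_range f).bddAbove
  exact ⟨M, fun w hw => hf w (hw.mono (hM ⟨w, rfl⟩))⟩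

theorem exists_forall_extendsToBwdExt_imp_isDblExt (hlf : G.LocallyFinite)
    (hqt : G.QuasiTransitive) (n : ℕ) :
    ∃ M, ∀ v (w : G.SAW n v), ExtendsToBwdExt M w → G.IsDblExt w := by
  obtain ⟨S, hS⟩ := hqt
  choose M hM using exists_extendsToBwdExt_imp_isDblExt hlf n
  refine ⟨S.sup M, fun v w hw => ?_⟩
  obtain ⟨s, hs, φ, hφ⟩ := hS v
  rw [← φ.mapSAW_symm_mapSAW hφ w]
  exact φ.isDblExt_mapSAW hφ
    (hM s _ ((hw.mapSAW _ (φ.symm_vmap_eq hφ)).mono (Finset.le_sup hs)))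

theorem exists_ssigmaB_add_le (hlf : G.LocallyFinite) (hqt : G.QuasiTransitive) (n : ℕ) :
    ∃ M, ∀ m, M ≤ m → G.ssigmaB (n + m) ≤ G.ssigmaFB n * G.ssigmaB m := by
  obtain ⟨M, hM⟩ := exists_forall_extendsToBwdExt_imp_isDblExt hlf hqt n
  refine ⟨M, fun m hm => iSup_le fun v => ?_⟩
  refine (card_le_card_mul_iSup hlf n m v _ (fun w => G.IsDblExt w) (fun w => G.IsBwdExt w)
    fun w hw => ⟨hM v _ (ExtendsToBwdExt.mono hm ⟨w, hw, rfl⟩), hw.drop _ _ _⟩).trans ?_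
  exact mul_le_mul_left (le_iSup (fun v => (G.sigmaFB n v : ℝ≥0∞)) v) _

end Dgraph

theorem muB_eq_muFB_general (G : Dgraph) (hlf : G.LocallyFinite) (hqt : G.QuasiTransitive) :
    ∃ μB μFB : ℝ≥0∞,
      Tendsto (fun n : ℕ => (G.ssigmaB n) ^ (1 / (n : ℝ))) atTop (nhds μB) ∧
      Tendsto (fun n : ℕ => (G.ssigmaFB n) ^ (1 / (n : ℝ))) atTop (nhds μFB) ∧
      μB = μFB := by
  obtain ⟨μB, hμB⟩ := exists_tendsto_rpow_one_div_of_submultiplicative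
    (G.ssigmaB_ne_top hlf hqt) (fun _ => one_le_iSup_natCast_of_ne_zero) (G.ssigmaB_add_le hlf)
  obtain ⟨μFB, hμFB⟩ := exists_tendsto_rpow_one_div_of_submultiplicative
    (G.ssigmaFB_ne_top hlf hqt) (fun _ => one_le_iSup_natCast_of_ne_zero) (G.ssigmaFB_add_le hlf)
  refine ⟨μB, μFB, hμB, hμFB, le_antisymm ?_ ?_⟩
  · refine ge_of_tendsto hμFB (eventually_atTop.2 ⟨1, fun n hn => ?_⟩)
    obtain ⟨M, hM⟩ := G.exists_ssigmaB_add_le hlf hqt n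
    exact le_rpow_one_div_of_add_le_mul hμB (G.ssigmaFB_ne_top hlf hqt n) (by omega)
      (G.ssigmaB_ne_top hlf hqt M) hM
  · exact le_of_tendsto_of_tendsto' hμFB hμB fun n =>
      ENNReal.rpow_le_rpow (G.ssigmaFB_le_ssigmaB hlf n) (by positivity)

/-- the limits `μ^B` and `μ^{FB}` exist and `μ^B = μ^{FB}`. -/
theorem muB_eq_muFB (G : Dgraph) (hinf : Infinite G.V) (hlf : G.LocallyFinite)
    (hsc : G.StronglyConnected) (hqt : G.QuasiTransitive) :
    ∃ μB μFB : ℝ≥0∞,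
      Tendsto (fun n : ℕ => (G.ssigmaB n) ^ (1 / (n : ℝ))) atTop (nhds μB) ∧
      Tendsto (fun n : ℕ => (G.ssigmaFB n) ^ (1 / (n : ℝ))) atTop (nhds μFB) ∧
      μB = μFB :=
  muB_eq_muFB_general G hlf hqt
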